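/- Correctness of the priority-queue conflict abstraction: for every state σ (a multiset over a linear order α) and every pair of operations among Min, RemoveMin, Insert x, Insert y, and Size that do not commute at σ, the access sets assigned to the two operations at σ conflict, i.e., some variable among v_min, v_incr, v_decr occurs in both access sets with at least one of the two accesses a write. -/

import Mathlib

/-- The three variables of the priority-queue conflict abstraction. -/
inductive PQVar where
  | vmin | vincr | vdecr
deriving DecidableEq

/-- Access modes: read or write. -/
inductive AccessMode where
  | rd | wr
deriving DecidableEq

/-- The priority-queue operations: `min`, `removeMin`, `insert x`, `size`. -/
inductive PQOp (α : Type*) where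
  | min : PQOp α
  | removeMin : PQOp α
  | insert (x : α) : PQOp α
  | size : PQOp α

/-- Return values of priority-queue operations. -/
inductive PQRet (α : Type*) where
  | val : Option α → PQRet α
  | nat : ℕ → PQRet α
  | unit : PQRet α

variable {α : Type*} [LinearOrder α]

/-- The least element of a multiset over a linear order (`none` if empty). -/
def leastOf (σ : Multiset α) : Option α := (σ.sort (· ≤ ·)).head?

/-- The effect of an operation on the abstract state. -/
def PQOp.applyState : PQOp α → Multiset α → Multiset α
  | .min, σ => σ
  | .removeMin, σ =>
      match leastOf σ with
      | none => σ
      | some m => σ.erase m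
  | .insert x, σ => x ::ₘ σ
  | .size, σ => σ

/-- The value returned by an operation at a given state. -/
def PQOp.ret : PQOp α → Multiset α → PQRet α
  | .min, σ => .val (leastOf σ)
  | .removeMin, σ => .val (leastOf σ)
  | .insert _, _ => .unit
  | .size, σ => .nat (Multiset.card σ)

/-- Two operations commute at `σ` if executing them in either order yields the
same final state and each operation returns the same value in both orders. -/
def PQOp.CommutesAt (o₁ o₂ : PQOp α) (σ : Multiset α) : Prop :=
  o₂.applyState (o₁.applyState σ) = o₁.applyState (o₂.applyState σ) ∧
  o₁.ret σ = o₁.ret (o₂.applyState σ) ∧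
  o₂.ret σ = o₂.ret (o₁.applyState σ)

/-- The conflict abstraction: the set of (variable, mode) accesses an operation
performs at state `σ`. -/
def PQOp.accesses : PQOp α → Multiset α → Set (PQVar × AccessMode)
  | .min, _ => {(.vmin, .rd)}
  | .removeMin, _ => {(.vdecr, .wr), (.vmin, .wr)}
  | .insert x, σ =>
      {(.vincr, .wr)} ∪
      (match leastOf σ with
        | none => {(.vmin, .wr)}
        | some m => if x < m then {(.vmin, .wr)} else {(.vmin, .rd)})
  | .size, _ => {(.vdecr, .rd), (.vincr, .rd)}

/-- Two access sets conflict if some variable occurs in both with at least one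
of the two accesses a write. -/
def Conflicts (A B : Set (PQVar × AccessMode)) : Prop :=
  ∃ v m₁ m₂, (v, m₁) ∈ A ∧ (v, m₂) ∈ B ∧ (m₁ = AccessMode.wr ∨ m₂ = AccessMode.wr)

lemma leastOf_spec {σ : Multiset α} {m : α} (h : leastOf σ = some m) :
    m ∈ σ ∧ ∀ b ∈ σ, m ≤ b := by
  unfold leastOf at h
  rcases hl : σ.sort (· ≤ ·) with _ | ⟨a, t⟩
  · rw [hl] at h; simp at h
  · rw [hl] at h
    simp only [List.head?] at h
    obtain rfl : a = m := by injection h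
    have hs : (σ.sort (· ≤ ·)).Pairwise (· ≤ ·) := Multiset.pairwise_sort _ _
    rw [hl] at hs
    constructor
    · rw [← Multiset.mem_sort (· ≤ ·), hl]; exact List.mem_cons_self
    · intro b hb
      rw [← Multiset.mem_sort (· ≤ ·), hl] at hb
      rcases List.mem_cons.mp hb with rfl | h2
      · exact le_refl _
      · exact (List.pairwise_cons.mp hs).1 b h2

lemma leastOf_cons_of_le {σ : Multiset α} {m x : α} (h : leastOf σ = some m)
    (hx : m ≤ x) : leastOf (x ::ₘ σ) = some m := by
  obtain ⟨hmem, hmin⟩ := leastOf_spec h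
  rcases ha : leastOf (x ::ₘ σ) with _ | a
  · unfold leastOf at ha
    rcases hl : (x ::ₘ σ).sort (· ≤ ·) with _ | ⟨b, t⟩
    · have : x ∈ (x ::ₘ σ).sort (· ≤ ·) := by
        rw [Multiset.mem_sort]; exact Multiset.mem_cons_self _ _
      rw [hl] at this; simp at this
    · rw [hl] at ha; simp at ha
  · obtain ⟨hamem, hamin⟩ := leastOf_spec ha
    have h1 : a ≤ m := hamin m (Multiset.mem_cons_of_mem hmem)
    have h2 : m ≤ a := by
      rcases Multiset.mem_cons.mp hamem with rfl | hmem'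
      · exact hx
      · exact hmin a hmem'
    exact congrArg some (le_antisymm h1 h2)

lemma insert_vmin (x : α) (σ : Multiset α) :
    ∃ m, (PQVar.vmin, m) ∈ (PQOp.insert (α := α) x).accesses σ := by
  rcases hl : leastOf σ with _ | a
  · exact ⟨.wr, by simp [PQOp.accesses, hl]⟩
  · by_cases hx : x < a
    · exact ⟨.wr, by simp [PQOp.accesses, hl, hx]⟩
    · exact ⟨.rd, by simp [PQOp.accesses, hl, hx]⟩

/-- **Correctness of the priority-queue conflict abstraction**: any two
operations that do not commute at a state `σ` have conflicting access sets. -/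
theorem pq_conflictAbstraction_correct (σ : Multiset α) (o₁ o₂ : PQOp α)
    (h : ¬ o₁.CommutesAt o₂ σ) :
    Conflicts (o₁.accesses σ) (o₂.accesses σ) := by
  cases o₁ with
  | min =>
    cases o₂ with
    | min => exact absurd ⟨rfl, rfl, rfl⟩ h
    | removeMin =>
      exact ⟨.vmin, .rd, .wr, by simp [PQOp.accesses], by simp [PQOp.accesses], Or.inr rfl⟩
    | insert x =>
      rcases hl : leastOf σ with _ | m
      · exact ⟨.vmin, .rd, .wr, by simp [PQOp.accesses],
          by simp [PQOp.accesses, hl], Or.inr rfl⟩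
      · by_cases hx : x < m
        · exact ⟨.vmin, .rd, .wr, by simp [PQOp.accesses],
            by simp [PQOp.accesses, hl, hx], Or.inr rfl⟩
        · refine absurd ⟨rfl, ?_, rfl⟩ h
          show PQRet.val (leastOf σ) = PQRet.val (leastOf (x ::ₘ σ))
          rw [hl, leastOf_cons_of_le hl (not_lt.mp hx)]
    | size => exact absurd ⟨rfl, rfl, rfl⟩ h
  | removeMin =>
    cases o₂ with
    | min =>
      exact ⟨.vmin, .wr, .rd, by simp [PQOp.accesses], by simp [PQOp.accesses], Or.inl rfl⟩
    | removeMin =>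
      exact ⟨.vmin, .wr, .wr, by simp [PQOp.accesses], by simp [PQOp.accesses], Or.inl rfl⟩
    | insert x =>
      obtain ⟨m₂, hm₂⟩ := insert_vmin x σ
      exact ⟨.vmin, .wr, m₂, by simp [PQOp.accesses], hm₂, Or.inl rfl⟩
    | size =>
      exact ⟨.vdecr, .wr, .rd, by simp [PQOp.accesses], by simp [PQOp.accesses], Or.inl rfl⟩
  | insert x =>
    cases o₂ with
    | min =>
      rcases hl : leastOf σ with _ | m
      · exact ⟨.vmin, .wr, .rd, by simp [PQOp.accesses, hl],
          by simp [PQOp.accesses], Or.inl rfl⟩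
      · by_cases hx : x < m
        · exact ⟨.vmin, .wr, .rd, by simp [PQOp.accesses, hl, hx],
            by simp [PQOp.accesses], Or.inl rfl⟩
        · refine absurd ⟨rfl, rfl, ?_⟩ h
          show PQRet.val (leastOf σ) = PQRet.val (leastOf (x ::ₘ σ))
          rw [hl, leastOf_cons_of_le hl (not_lt.mp hx)]
    | removeMin =>
      obtain ⟨m₁, hm₁⟩ := insert_vmin x σ
      exact ⟨.vmin, m₁, .wr, hm₁, by simp [PQOp.accesses], Or.inr rfl⟩
    | insert y =>
      exact ⟨.vincr, .wr, .wr, Or.inl rfl, Or.inl rfl, Or.inl rfl⟩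
    | size =>
      exact ⟨.vincr, .wr, .rd, Or.inl rfl, by simp [PQOp.accesses], Or.inl rfl⟩
  | size =>
    cases o₂ with
    | min => exact absurd ⟨rfl, rfl, rfl⟩ h
    | removeMin =>
      exact ⟨.vdecr, .rd, .wr, by simp [PQOp.accesses], by simp [PQOp.accesses], Or.inr rfl⟩
    | insert x =>
      exact ⟨.vincr, .rd, .wr, by simp [PQOp.accesses], Or.inl rfl, Or.inr rfl⟩
    | size => exact absurd ⟨rfl, rfl, rfl⟩ h
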